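/- Let K be an almost real closed field, let < be a linear order making K a linearly ordered field, and let A be a proper henselian valuation subring of K (A ≠ K, A a valuation subring of K that is henselian as a local ring) with associated valuation v. Then the topology on K induced by v coincides with the order topology induced by <. -/

import Mathlib

/-- A linear order on a field `K` (given by its strict order relation) making `K`
a linearly ordered field. -/
structure FieldOrder (K : Type*) [Field K] where
  /-- the strict order relation -/
  lt : K → K → Prop
  lt_trans : ∀ a b c : K, lt a b → lt b c → lt a c
  lt_irrefl : ∀ a : K, ¬ lt a a
  lt_total : ∀ a b : K, a ≠ b → lt a b ∨ lt b a
  add_lt_add_left : ∀ a b c : K, lt a b → lt (c + a) (c + b)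
  mul_pos : ∀ a b : K, lt 0 a → lt 0 b → lt 0 (a * b)

/-- A linearly ordered field (given by a `FieldOrder`) is real closed if every nonnegative
element is a square and every polynomial of odd degree has a root. -/
def FieldOrder.IsRealClosed {K : Type*} [Field K] (o : FieldOrder K) : Prop :=
  (∀ x : K, ¬ o.lt x 0 → ∃ y : K, y ^ 2 = x) ∧
    (∀ p : Polynomial K, Odd p.natDegree → ∃ x : K, p.eval x = 0)

/-- A field is almost real closed if it admits a henselian valuation subring whose
residue field admits an order making it a real closed field. -/
def IsAlmostRealClosedField (K : Type*) [Field K] : Prop :=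
  ∃ A : ValuationSubring K, HenselianLocalRing A ∧
    ∃ o : FieldOrder (IsLocalRing.ResidueField A), o.IsRealClosed

/-- The order topology on a linearly ordered field: the topology generated by the
open intervals. -/
def orderTopologyOf (K : Type*) [Field K] [LinearOrder K] [IsStrictOrderedRing K] : TopologicalSpace K :=
  TopologicalSpace.generateFrom {s | ∃ a b : K, s = Set.Ioo a b}

/-- The topology induced by the valuation associated to a valuation subring `A` of `K`:
the topology generated by the "open balls" `{x | v (x - a) < γ}` (in the multiplicative
convention of Mathlib, `v (x - a) < γ` corresponds to `v (x - a) > γ` in the additive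
convention), which form a neighbourhood basis at each point `a`. -/
def valuationTopologyOf {K : Type*} [Field K] (A : ValuationSubring K) :
    TopologicalSpace K :=
  TopologicalSpace.generateFrom
    {s | ∃ (a : K) (γ : A.ValueGroup), γ ≠ 0 ∧ s = {x | A.valuation (x - a) < γ}}

/-!
Since `x² + x + 2 > 0` in an ordered field, Hensel's lemma applied to `X² + X + 2` at `0` shows
that `2` is a unit of a henselian valuation ring `A`, and then, applied to `X² - (1 + x)` at `1`,
that every principal unit `1 + x` (`v x < 1`) is a square, hence positive. So `v x < 1` forces
`|x| < 1`, and therefore `v u < v w` forces `|u| < |w|`: `A` is convex, and the balls of `v` and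
the open intervals refine each other. Properness of `A` provides a nonzero element of value `< γ`
for each `γ ≠ 0`, which is what makes the balls open in the order topology.
-/

open Polynomial Topology

namespace ValuationSubring

variable {K : Type*} [Field K]

theorem exists_ne_zero_valuation_lt (A : ValuationSubring K) (hproper : (A : Set K) ≠ Set.univ)
    {γ : A.ValueGroup} (hγ : γ ≠ 0) : ∃ e : K, e ≠ 0 ∧ A.valuation e < γ := by
  obtain ⟨c, hc⟩ : ∃ c : K, c ∉ A := by
    by_contra! h
    exact hproper (Set.eq_univ_of_forall h)
  obtain ⟨r, rfl⟩ := A.valuation_surjective γ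
  have hc0 : c ≠ 0 := fun h => hc (h ▸ A.zero_mem)
  have hr0 : r ≠ 0 := by simpa using hγ
  have hc1 : 1 < A.valuation c := lt_of_not_ge fun h => hc ((A.valuation_le_one_iff c).mp h)
  refine ⟨r * c⁻¹, mul_ne_zero hr0 (inv_ne_zero hc0), ?_⟩
  rw [map_mul, map_inv₀]
  exact mul_inv_lt_of_lt_mul₀ (lt_mul_of_one_lt_right (zero_lt_iff.mpr hγ) hc1)

variable [LinearOrder K] [IsStrictOrderedRing K] (A : ValuationSubring K) [HenselianLocalRing A]

theorem isUnit_two_of_henselian : IsUnit (2 : A) := by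
  by_contra h2
  obtain ⟨a, ha, -⟩ := HenselianLocalRing.is_henselian (R := A)
    (X ^ 2 + X + C 2) (by monicity!) 0 (by simpa using h2) (by simp)
  have ha' : (a : K) ^ 2 + (a : K) + 2 = 0 := by
    have := congrArg (algebraMap A K) ha
    simp only [eval_add, eval_pow, eval_X, eval_ofNat, map_add, map_pow, map_ofNat, map_zero] at this
    exact this
  nlinarith [sq_nonneg (2 * (a : K) + 1)]

theorem exists_mul_self_eq_one_add {a : A} (ha : a ∈ IsLocalRing.maximalIdeal A) :
    ∃ b : A, b * b = 1 + a := by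
  obtain ⟨b, hb, -⟩ := HenselianLocalRing.is_henselian (R := A)
    (X ^ 2 - C (1 + a)) (by monicity!) 1
    (by simpa using (IsLocalRing.maximalIdeal A).neg_mem ha)
    (by simpa [one_add_one_eq_two] using A.isUnit_two_of_henselian)
  refine ⟨b, ?_⟩
  rw [← sq, ← sub_eq_zero]
  simpa using hb

theorem one_add_pos_of_valuation_lt_one {x : K} (hx : A.valuation x < 1) : 0 < 1 + x := by
  have hxA : x ∈ A := (A.valuation_le_one_iff x).mp hx.le
  obtain ⟨b, hb⟩ := A.exists_mul_self_eq_one_add ((A.valuation_lt_one_iff ⟨x, hxA⟩).mpr hx)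
  have hsq : (b : K) * b = 1 + x := congrArg (algebraMap A K) hb
  have hne : 1 + x ≠ 0 := fun h => by
    simpa [h] using Valuation.map_one_add_of_lt A.valuation hx
  exact lt_of_le_of_ne (hsq ▸ mul_self_nonneg _) hne.symm

theorem abs_lt_one_of_valuation_lt_one {x : K} (hx : A.valuation x < 1) : |x| < 1 := by
  have h₁ := A.one_add_pos_of_valuation_lt_one hx
  have h₂ := A.one_add_pos_of_valuation_lt_one (x := -x) (by simpa using hx)
  rw [abs_lt]
  constructor <;> linarith

theorem abs_lt_abs_of_valuation_lt {u w : K} (h : A.valuation u < A.valuation w) :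
    |u| < |w| := by
  have hw : w ≠ 0 := by
    rintro rfl
    simp at h
  have hdiv : A.valuation (u / w) < 1 := by
    rw [map_div₀, div_eq_mul_inv]
    exact mul_inv_lt_of_lt_mul₀ (by rwa [one_mul])
  have := A.abs_lt_one_of_valuation_lt_one hdiv
  rwa [abs_div, div_lt_one (abs_pos.mpr hw)] at this

theorem valuation_le_of_abs_lt {u w : K} (h : |u| < |w|) : A.valuation u ≤ A.valuation w :=
  le_of_not_gt fun hwu => (A.abs_lt_abs_of_valuation_lt hwu).not_gt h

end ValuationSubring

theorem isOpen_generateFrom_of_forall_mem {α : Type*} {g : Set (Set α)} {U : Set α}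
    (h : ∀ x ∈ U, ∃ t ∈ g, x ∈ t ∧ t ⊆ U) : IsOpen[TopologicalSpace.generateFrom g] U :=
  (@isOpen_iff_forall_mem_open α (TopologicalSpace.generateFrom g) U).mpr fun x hx =>
    let ⟨t, htg, hxt, htU⟩ := h x hx
    ⟨t, htU, TopologicalSpace.isOpen_generateFrom_of_mem htg, hxt⟩

section

variable {K : Type*} [Field K] [LinearOrder K] [IsStrictOrderedRing K]

theorem isOpen_Ioo_valuationTopologyOf (A : ValuationSubring K) [HenselianLocalRing A]
    (a b : K) : IsOpen[valuationTopologyOf A] (Set.Ioo a b) := by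
  refine isOpen_generateFrom_of_forall_mem fun x ⟨hax, hxb⟩ => ?_
  set ε := min (x - a) (b - x)
  have hε : 0 < ε := lt_min (by linarith) (by linarith)
  have hvε : A.valuation ε ≠ 0 := by simpa using hε.ne'
  refine ⟨{y | A.valuation (y - x) < A.valuation ε}, ⟨x, _, hvε, rfl⟩, ?_, fun y hy => ?_⟩
  · simpa [zero_lt_iff] using hvε
  · have hyx : |y - x| < ε := abs_of_pos hε ▸ A.abs_lt_abs_of_valuation_lt hy
    rw [abs_lt] at hyx
    constructor <;> linarith [min_le_left (x - a) (b - x), min_le_right (x - a) (b - x)]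

theorem isOpen_ball_orderTopologyOf (A : ValuationSubring K) [HenselianLocalRing A]
    (hproper : (A : Set K) ≠ Set.univ) (a : K) {γ : A.ValueGroup} (hγ : γ ≠ 0) :
    IsOpen[orderTopologyOf K] {x | A.valuation (x - a) < γ} := by
  refine isOpen_generateFrom_of_forall_mem fun x hx => ?_
  obtain ⟨e, he, hve⟩ := A.exists_ne_zero_valuation_lt hproper hγ
  have he' : 0 < |e| := abs_pos.mpr he
  refine ⟨Set.Ioo (x - |e|) (x + |e|), ⟨_, _, rfl⟩, ⟨by linarith, by linarith⟩, ?_⟩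
  rintro y ⟨hy₁, hy₂⟩
  have hyx : A.valuation (y - x) < γ :=
    (A.valuation_le_of_abs_lt (abs_lt.mpr ⟨by linarith, by linarith⟩)).trans_lt hve
  calc A.valuation (y - a) = A.valuation ((y - x) + (x - a)) := by rw [sub_add_sub_cancel]
    _ ≤ max (A.valuation (y - x)) (A.valuation (x - a)) := A.valuation.map_add _ _
    _ < γ := max_lt hyx hx

end

theorem valuationTopology_eq_orderTopology_general (K : Type*) [Field K] [LinearOrder K]
    [IsStrictOrderedRing K]
    (A : ValuationSubring K)
    (hproper : (A : Set K) ≠ Set.univ) (hhens : HenselianLocalRing A) :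
    valuationTopologyOf A = orderTopologyOf K := by
  apply le_antisymm
  · refine le_generateFrom ?_
    rintro _ ⟨a, b, rfl⟩
    exact isOpen_Ioo_valuationTopologyOf A a b
  · refine le_generateFrom ?_
    rintro _ ⟨a, γ, hγ, rfl⟩
    exact isOpen_ball_orderTopologyOf A hproper a hγ

/-- On an almost real closed field with an order `<` making it a linearly ordered field,
the topology induced by (the valuation associated to) any proper henselian valuation
subring coincides with the order topology. -/
theorem valuationTopology_eq_orderTopology (K : Type*) [Field K] [LinearOrder K]
    [IsStrictOrderedRing K]
    (hK : IsAlmostRealClosedField K) (A : ValuationSubring K)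
    (hproper : (A : Set K) ≠ Set.univ) (hhens : HenselianLocalRing A) :
    valuationTopologyOf A = orderTopologyOf K :=
  valuationTopology_eq_orderTopology_general K A hproper hhens
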